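/- arXiv:2104.14625 — 4 statements merged into one kernel-verified Lean document; each statement's English description precedes it below -/
import Mathlib

section
/- Let G be a finite group and Λ a group on which G acts by automorphisms. Suppose Λ admits a subgroup Θ of finite index that is a finitely generated abelian group. Then the first nonabelian cohomology set H^1(G, Λ) is finite. -/
/-!
Choose a normal subgroup `N ≤ Θ` of finite index that is stable under `G` (intersect the
`G`-translates of the normal core of `Θ`). Reduction modulo `N` takes cocycles to the finite set
of maps `G → Λ ⧸ N`, so it suffices to show that each fibre meets finitely many classes. For a
cocycle `ξ₀`, the map `ξ ↦ ξ · ξ₀⁻¹` sends the cocycles congruent to `ξ₀` modulo `N` to cocycles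
with values in the abelian group `N` for the twisted action `n ↦ ξ₀(σ) (σ • n) ξ₀(σ)⁻¹`, and
cocycles with cohomologous images are cohomologous. The `H¹` of the finitely generated abelian
group `N` is finitely generated and killed by `|G|` (if `z` is a cocycle, `z ^ |G|` is the
coboundary of `(∏ τ, z τ)⁻¹`), hence finite.
-/

open scoped IsMulCommutative

theorem Quot.finite_of_eq_imp_rel {X F : Type*} [Finite F] {r : X → X → Prop} (c : X → F)
    (hc : ∀ x y, c x = c y → r x y) : Finite (Quot r) :=
  Finite.of_surjective (fun y : Set.range c => Quot.mk r y.2.choose) <| Quot.ind fun x =>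
    ⟨⟨c x, x, rfl⟩, Quot.sound <| hc _ _ (⟨c x, x, rfl⟩ : Set.range c).2.choose_spec⟩

theorem Quot.finite_of_finite_fibers {X Y : Type*} [Finite Y] {r : X → X → Prop} (f : X → Y)
    (h : ∀ x, Finite (Quot fun a b : {x' // f x' = f x} => r a b)) : Finite (Quot r) := by
  have hfib (y : Y) : Finite (Quot fun a b : {x // f x = y} => r a b) := by
    by_cases hy : ∃ x, f x = y
    · obtain ⟨x, rfl⟩ := hy
      exact h x
    · have : IsEmpty {x // f x = y} := ⟨fun x => hy ⟨x.1, x.2⟩⟩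
      infer_instance
  exact Finite.of_surjective (fun p : Σ y, Quot fun a b : {x // f x = y} => r a b =>
      Quot.map Subtype.val (fun _ _ h => h) p.2)
    (Quot.ind fun x => ⟨⟨f x, Quot.mk _ ⟨x, rfl⟩⟩, rfl⟩)

theorem CommGroup.fg_subgroup {M : Type*} [CommGroup M] [Group.FG M] (H : Subgroup M) : H.FG := by
  have : Module.Finite ℤ (Additive M) := Module.Finite.iff_addGroup_fg.mpr inferInstance
  rw [Subgroup.fg_iff_add_fg]
  simpa [Submodule.fg_iff_addSubgroup_fg] using
    IsNoetherian.noetherian (AddSubgroup.toIntSubmodule H.toAddSubgroup)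

section Twisted

variable {G M : Type*} [Group G] [Group M] [IsMulCommutative M] (t : G → M →* M)

def twistedCocycles : Subgroup (G → M) where
  carrier := {a | ∀ σ τ, a (σ * τ) = a σ * t σ (a τ)}
  mul_mem' {a b} ha hb σ τ := by
    simp only [Pi.mul_apply, ha σ τ, hb σ τ, map_mul, mul_mul_mul_comm]
  one_mem' _ _ := by simp
  inv_mem' {a} ha σ τ := by simp [ha σ τ, mul_comm]

def twistedCoboundary : M →* (G → M) where
  toFun m σ := m⁻¹ * t σ m
  map_one' := by ext; simp
  map_mul' m n := by ext σ; simp [mul_mul_mul_comm, mul_comm]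

abbrev TwistedH1 : Type _ :=
  twistedCocycles t ⧸ (twistedCoboundary t).range.subgroupOf (twistedCocycles t)

theorem pow_card_eq_inv_twistedCoboundary [Fintype G] {z : G → M} (hz : z ∈ twistedCocycles t) :
    z ^ Fintype.card G = (twistedCoboundary t (∏ τ, z τ))⁻¹ := by
  funext σ
  have key : z σ ^ Fintype.card G * t σ (∏ τ, z τ) = ∏ τ, z τ := calc
    _ = ∏ τ, z σ * t σ (z τ) := by
      rw [Finset.prod_mul_distrib, Finset.prod_const, Finset.card_univ, map_prod]
    _ = ∏ τ, z (σ * τ) := Finset.prod_congr rfl fun τ _ => (hz σ τ).symm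
    _ = ∏ τ, z τ := Equiv.prod_comp (Equiv.mulLeft σ) z
  simp only [Pi.pow_apply, Pi.inv_apply, twistedCoboundary, MonoidHom.coe_mk, OneHom.coe_mk,
    mul_inv_rev, inv_inv]
  rw [eq_inv_mul_iff_mul_eq, mul_comm]
  exact key

theorem finite_twistedH1 [Finite G] [Group.FG M] : Finite (TwistedH1 t) := by
  have := Fintype.ofFinite G
  have : Group.FG (twistedCocycles t) :=
    (Group.fg_iff_subgroup_fg _).mpr (CommGroup.fg_subgroup _)
  refine CommGroup.finite_of_fg_isMulTorsion _ fun x => ?_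
  obtain ⟨z, rfl⟩ := QuotientGroup.mk_surjective x
  refine isOfFinOrder_iff_pow_eq_one.mpr ⟨Fintype.card G, Fintype.card_pos, ?_⟩
  rw [← QuotientGroup.mk_pow, QuotientGroup.eq_one_iff, Subgroup.mem_subgroupOf,
    SubgroupClass.coe_pow, pow_card_eq_inv_twistedCoboundary t z.2]
  exact inv_mem ⟨_, rfl⟩

theorem exists_eq_inv_mul_mul_of_twistedH1_mk_eq {a b : twistedCocycles t}
    (h : (a : TwistedH1 t) = b) : ∃ m, ∀ σ, (b : G → M) σ = m⁻¹ * a.1 σ * t σ m := by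
  obtain ⟨m, hm⟩ := Subgroup.mem_subgroupOf.mp (QuotientGroup.eq.mp h)
  refine ⟨m, fun σ => ?_⟩
  have := congrFun hm σ
  simp only [twistedCoboundary, MonoidHom.coe_mk, OneHom.coe_mk] at this
  rw [mul_right_comm, this, mul_comm]
  simp

end Twisted

theorem Subgroup.exists_normal_finiteIndex_le_smul_mem {G Λ : Type*} [Group G] [Finite G]
    [Group Λ] [MulDistribMulAction G Λ] (Θ : Subgroup Λ) [Θ.FiniteIndex] :
    ∃ N : Subgroup Λ, N.Normal ∧ N.FiniteIndex ∧ N ≤ Θ ∧ ∀ (σ : G) x, x ∈ N → σ • x ∈ N := by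
  set N := ⨅ σ : G, Θ.normalCore.comap (MulDistribMulAction.toMonoidHom Λ σ)
  have mem_N (x : Λ) : x ∈ N ↔ ∀ σ : G, σ • x ∈ Θ.normalCore := by
    simp [N, Subgroup.mem_iInf]
  refine ⟨N, normal_iInf_normal fun σ => inferInstance, finiteIndex_iInf fun σ => ?_,
    fun x hx => Θ.normalCore_le (by simpa using (mem_N x).1 hx 1), fun σ x hx => ?_⟩
  · constructor
    rw [index_comap_of_surjective _ (MulAction.surjective σ)]
    exact FiniteIndex.index_ne_zero
  · exact (mem_N _).2 fun τ => by rw [smul_smul]; exact (mem_N x).1 hx _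

section Nonabelian

variable {G Λ : Type*} [Group G] [Group Λ] [MulDistribMulAction G Λ]

variable (G Λ) in
abbrev Cocycle : Type _ := {ξ : G → Λ // ∀ σ τ : G, ξ (σ * τ) = ξ σ * σ • ξ τ}

def Cocycle.Cohomologous (ξ ξ' : Cocycle G Λ) : Prop :=
  ∃ l : Λ, ∀ σ : G, ξ'.1 σ = l⁻¹ * ξ.1 σ * σ • l

def Cocycle.reduce (N : Subgroup Λ) (ξ : Cocycle G Λ) : G → Λ ⧸ N := fun σ => ξ.1 σ

variable {N : Subgroup Λ} [N.Normal]

def twistAction (hN : ∀ (σ : G) x, x ∈ N → σ • x ∈ N) (ξ₀ : Cocycle G Λ) (σ : G) : N →* N where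
  toFun n := ⟨ξ₀.1 σ * σ • (n : Λ) * (ξ₀.1 σ)⁻¹, ‹N.Normal›.conj_mem _ (hN σ n n.2) _⟩
  map_one' := by ext; simp
  map_mul' a b := by ext; simp [smul_mul', mul_assoc]

variable [IsMulCommutative N]

def twistedDiff (hN : ∀ (σ : G) x, x ∈ N → σ • x ∈ N) (ξ₀ : Cocycle G Λ)
    (ξ : {ξ : Cocycle G Λ // Cocycle.reduce N ξ = Cocycle.reduce N ξ₀}) :
    twistedCocycles (twistAction hN ξ₀) :=
  ⟨fun σ => ⟨ξ.1.1 σ / ξ₀.1 σ, QuotientGroup.eq_iff_div_mem.mp (congrFun ξ.2 σ)⟩, fun σ τ => by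
    ext
    change ξ.1.1 (σ * τ) / ξ₀.1 (σ * τ) =
      ξ.1.1 σ / ξ₀.1 σ * (ξ₀.1 σ * σ • (ξ.1.1 τ / ξ₀.1 τ) * (ξ₀.1 σ)⁻¹)
    rw [ξ.1.2, ξ₀.2, smul_div']
    simp only [div_eq_mul_inv]
    group⟩

theorem cohomologous_of_twistedDiff_eq (hN : ∀ (σ : G) x, x ∈ N → σ • x ∈ N)
    (ξ₀ : Cocycle G Λ)
    {ξ ξ' : {ξ : Cocycle G Λ // Cocycle.reduce N ξ = Cocycle.reduce N ξ₀}}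
    (h : (twistedDiff hN ξ₀ ξ : TwistedH1 (twistAction hN ξ₀)) = twistedDiff hN ξ₀ ξ') :
    ξ.1.Cohomologous ξ'.1 := by
  obtain ⟨m, hm⟩ := exists_eq_inv_mul_mul_of_twistedH1_mk_eq _ h
  refine ⟨m, fun σ => ?_⟩
  have key : ξ'.1.1 σ / ξ₀.1 σ =
      (m : Λ)⁻¹ * (ξ.1.1 σ / ξ₀.1 σ) * (ξ₀.1 σ * σ • (m : Λ) * (ξ₀.1 σ)⁻¹) :=
    congrArg Subtype.val (hm σ)
  rw [div_eq_iff_eq_mul.mp key]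
  simp only [div_eq_mul_inv]
  group

theorem finite_quot_cohomologous_fiber [Finite G] [Group.FG N]
    (hN : ∀ (σ : G) x, x ∈ N → σ • x ∈ N) (ξ₀ : Cocycle G Λ) :
    Finite (Quot fun ξ ξ' : {ξ : Cocycle G Λ // Cocycle.reduce N ξ = Cocycle.reduce N ξ₀} =>
      ξ.1.Cohomologous ξ'.1) :=
  have := finite_twistedH1 (twistAction hN ξ₀)
  Quot.finite_of_eq_imp_rel (fun ξ => (twistedDiff hN ξ₀ ξ : TwistedH1 (twistAction hN ξ₀)))
    fun _ _ => cohomologous_of_twistedDiff_eq hN ξ₀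

end Nonabelian

/-- Let `G` be a finite group acting by automorphisms on a group `Λ`.
If `Λ` admits a finite-index subgroup `Θ` that is a finitely generated abelian group,
then the nonabelian cohomology set `H¹(G, Λ)` (continuous cocycles modulo the standard
equivalence) is finite. -/
theorem h1_finite_of_fg_abelian_finite_index
    (G : Type) [Group G] [Finite G] (Λ : Type) [Group Λ] [MulDistribMulAction G Λ]
    (Θ : Subgroup Λ) (hindex : Θ.FiniteIndex) (hfg : Θ.FG)
    (habelian : ∀ a b : Θ, a * b = b * a) :
    Finite (Quot (fun (ξ ξ' : {ξ : G → Λ // ∀ σ τ : G, ξ (σ * τ) = ξ σ * σ • ξ τ}) =>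
      ∃ l : Λ, ∀ σ : G, ξ'.1 σ = l⁻¹ * ξ.1 σ * σ • l)) := by
  obtain ⟨N, _, _, hNΘ, hN⟩ := Θ.exists_normal_finiteIndex_le_smul_mem (G := G)
  have : IsMulCommutative N := .of_setLike_mul_comm fun a ha b hb =>
    congrArg Subtype.val (habelian ⟨a, hNΘ ha⟩ ⟨b, hNΘ hb⟩)
  have : Group.FG Θ := (Group.fg_iff_subgroup_fg Θ).mpr hfg
  have : Group.FG N :=
    let e := Subgroup.subgroupOfEquivOfLe hNΘ
    Group.fg_of_surjective (f := e.toMonoidHom) e.surjective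
  exact Quot.finite_of_finite_fibers (Cocycle.reduce N) (finite_quot_cohomologous_fiber hN)
end

section
/- Let G be a profinite group and N a closed normal subgroup of G. If both N and G/N are small (i.e., for every finite group Φ the set of continuous homomorphisms to Φ is finite), then G is small. -/
/-!
Restriction to `N` maps the continuous homomorphisms `G → Φ` to the finite set of those
`N → Φ`, so it suffices that each fibre is finite. If `f` and `f₀` agree on `N`, then
`g • x = f g * x * (f₀ g)⁻¹` is an action of `G` on the centralizer of `f₀(N)` which is trivial
on `N` and locally constant, i.e. a continuous homomorphism from `G ⧸ N` to a finite
symmetric group; it determines `f` through `f g = (g • 1) * f₀ g`. Smallness of `G ⧸ N`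
leaves finitely many choices.
-/

/-- A profinite (topological) group is *small* if for every finite (discrete) group `Φ`,
the set of continuous homomorphisms into `Φ` is finite (Serre's condition (F)). -/
def IsSmall (G : Type) [Group G] [TopologicalSpace G] : Prop :=
  ∀ (Φ : Type) [Group Φ] [TopologicalSpace Φ] [DiscreteTopology Φ] [Finite Φ],
    Finite {f : G →* Φ // Continuous f}

open Subgroup

section Twist

variable {G Φ : Type*} [Group G] [Group Φ] {N : Subgroup G} [N.Normal] {f f₀ : G →* Φ}

theorem mul_mul_inv_mem_centralizer_of_eqOn (h : ∀ n ∈ N, f n = f₀ n) (g : G) {x : Φ}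
    (hx : x ∈ centralizer (f₀ '' N)) : f g * x * (f₀ g)⁻¹ ∈ centralizer (f₀ '' N) := by
  rw [mem_centralizer_iff] at hx ⊢
  rintro _ ⟨n, hn, rfl⟩
  have hm : g⁻¹ * n * g ∈ N := by simpa using Normal.conj_mem ‹_› n hn g⁻¹
  have hx' : f₀ (g⁻¹ * n * g) * x = x * f₀ (g⁻¹ * n * g) := hx _ ⟨_, hm, rfl⟩
  have hf : f₀ n * f g = f g * f₀ (g⁻¹ * n * g) := by
    rw [← h n hn, ← h _ hm, ← map_mul, ← map_mul]; group
  have hf₀ : (f₀ g)⁻¹ * f₀ n = f₀ (g⁻¹ * n * g) * (f₀ g)⁻¹ := by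
    simp only [map_mul, map_inv]; group
  calc f₀ n * (f g * x * (f₀ g)⁻¹) = f g * (f₀ (g⁻¹ * n * g) * x) * (f₀ g)⁻¹ := by
        rw [← mul_assoc, ← mul_assoc, hf]; group
    _ = f g * x * (f₀ g)⁻¹ * f₀ n := by
        rw [hx', mul_assoc (f g * x), hf₀]; group

def twistPerm (h : ∀ n ∈ N, f n = f₀ n) : G →* Equiv.Perm (centralizer (f₀ '' N)) where
  toFun g :=
    { toFun x := ⟨f g * x * (f₀ g)⁻¹, mul_mul_inv_mem_centralizer_of_eqOn h g x.2⟩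
      invFun x := ⟨f g⁻¹ * x * (f₀ g⁻¹)⁻¹, mul_mul_inv_mem_centralizer_of_eqOn h g⁻¹ x.2⟩
      left_inv x := Subtype.ext (by simp only [map_inv, inv_inv]; group)
      right_inv x := Subtype.ext (by simp only [map_inv, inv_inv]; group) }
  map_one' := Equiv.ext fun x => Subtype.ext (by simp)
  map_mul' a b := Equiv.ext fun x => Subtype.ext <| by
    simp only [Equiv.Perm.mul_apply, Equiv.coe_fn_mk, map_mul, mul_inv_rev]
    group

@[simp]
theorem twistPerm_apply_coe (h : ∀ n ∈ N, f n = f₀ n) (g : G) (x : centralizer (f₀ '' N)) :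
    (twistPerm h g x : Φ) = f g * x * (f₀ g)⁻¹ :=
  rfl

theorem le_ker_twistPerm (h : ∀ n ∈ N, f n = f₀ n) : N ≤ (twistPerm h).ker := fun n hn =>
  Equiv.ext fun x => Subtype.ext <| by
    rw [twistPerm_apply_coe, h n hn, mem_centralizer_iff.mp x.2 _ ⟨n, hn, rfl⟩,
      mul_inv_cancel_right]
    rfl

theorem twistPerm_apply_one_mul (h : ∀ n ∈ N, f n = f₀ n) (g : G) :
    (twistPerm h g 1 : Φ) * f₀ g = f g := by
  simp

theorem isLocallyConstant_twistPerm [TopologicalSpace G] [TopologicalSpace Φ] [DiscreteTopology Φ]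
    [Finite Φ] (h : ∀ n ∈ N, f n = f₀ n) (hf : Continuous f) (hf₀ : Continuous f₀) :
    IsLocallyConstant (twistPerm h) := by
  refine IsLocallyConstant.desc _ (fun σ : Equiv.Perm _ => (σ : centralizer (f₀ '' N) → _)) ?_
    DFunLike.coe_injective
  rw [IsLocallyConstant.iff_continuous]
  refine continuous_pi fun x => ?_
  exact ((hf.mul continuous_const).mul hf₀.inv).subtype_mk _

end Twist

theorem finite_eqOn_of_isSmall_quotient {G Φ : Type} [Group G] [TopologicalSpace G] [Group Φ]
    [TopologicalSpace Φ] [DiscreteTopology Φ] [Finite Φ] {N : Subgroup G} [N.Normal]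
    (hQ : IsSmall (G ⧸ N)) {f₀ : G →* Φ} (hf₀ : Continuous f₀) :
    Finite {f : G →* Φ // Continuous f ∧ ∀ n ∈ N, f n = f₀ n} := by
  let _ : TopologicalSpace (Equiv.Perm (centralizer (f₀ '' N))) := ⊥
  have : DiscreteTopology (Equiv.Perm (centralizer (f₀ '' N))) := ⟨rfl⟩
  have := hQ (Equiv.Perm (centralizer (f₀ '' N)))
  refine Finite.of_injective (β := {F : G ⧸ N →* _ // Continuous F})
    (fun f => ⟨QuotientGroup.lift N _ (le_ker_twistPerm f.2.2),
      (QuotientGroup.isQuotientMap_mk N).continuous_iff.mpr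
        (isLocallyConstant_twistPerm f.2.2 f.2.1 hf₀).continuous⟩) fun f f' hff => ?_
  ext g
  rw [← twistPerm_apply_one_mul f.2.2, ← twistPerm_apply_one_mul f'.2.2]
  congr 3
  exact congr($hff.1 (g : G ⧸ N))

theorem isSmall_of_isSmall_of_isSmall_quotient_general
    (G : Type) [Group G] [TopologicalSpace G]
    (N : Subgroup G) [N.Normal]
    (hN : IsSmall N) (hQ : IsSmall (G ⧸ N)) :
    IsSmall G := by
  intro Φ _ _ _ _
  have := hN Φ
  let restrict (f : {f : G →* Φ // Continuous f}) : {φ : N →* Φ // Continuous φ} :=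
    ⟨f.1.comp N.subtype, f.2.comp continuous_subtype_val⟩
  have finite_fiber (φ : {φ : N →* Φ // Continuous φ}) : Finite {f // restrict f = φ} := by
    rcases isEmpty_or_nonempty {f // restrict f = φ} with _ | ⟨f₀, rfl⟩
    · infer_instance
    have := finite_eqOn_of_isSmall_quotient hQ f₀.2
    refine Finite.of_injective (β := {f : G →* Φ // Continuous f ∧ ∀ n ∈ N, f n = f₀.1 n})
      (fun f => ⟨f.1.1, f.1.2, fun n hn => congr($(f.2).1 ⟨n, hn⟩)⟩)
      fun f f' hff => Subtype.ext (Subtype.ext congr($hff.1))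
  exact Finite.of_equiv _ (Equiv.sigmaFiberEquiv restrict)

/-- Let `G` be a profinite group and `N` a closed normal subgroup.
If both `N` and `G/N` are small, then `G` is small. -/
theorem isSmall_of_isSmall_of_isSmall_quotient
    (G : Type) [Group G] [TopologicalSpace G] [IsTopologicalGroup G]
    [CompactSpace G] [T2Space G] [TotallyDisconnectedSpace G]
    (N : Subgroup G) [N.Normal] (hclosed : IsClosed (N : Set G))
    (hN : IsSmall N) (hQ : IsSmall (G ⧸ N)) :
    IsSmall G :=
  isSmall_of_isSmall_of_isSmall_quotient_general G N hN hQ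
end

section
/- Every topologically finitely generated profinite group is small. -/
section

variable {G M : Type*} [Group G] [TopologicalSpace G] [Monoid M] [TopologicalSpace M] [T2Space M]

theorem MonoidHom.eq_of_eqOn_of_dense_closure {s : Set G}
    (hs : Dense (Subgroup.closure s : Set G)) {f g : G →* M} (hf : Continuous f)
    (hg : Continuous g) (h : s.EqOn f g) : f = g :=
  DFunLike.coe_injective <| hf.ext_on hs hg (MonoidHom.eqOn_closure h)

theorem finite_continuous_monoidHom_of_dense_closure [Finite M] {s : Set G} (hs_fin : s.Finite)
    (hs : Dense (Subgroup.closure s : Set G)) : Finite {f : G →* M // Continuous f} := by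
  have := hs_fin.to_subtype
  refine Finite.of_injective (fun f (x : s) => f.1 x) fun f g hfg => ?_
  exact Subtype.ext <| MonoidHom.eq_of_eqOn_of_dense_closure hs f.2 g.2 fun x hx =>
    congrFun hfg ⟨x, hx⟩

end

theorem isSmall_of_topologically_finitely_generated_general
    (G : Type) [Group G] [TopologicalSpace G]
    (S : Finset G) (hdense : Dense ((Subgroup.closure (S : Set G) : Subgroup G) : Set G)) :
    IsSmall G := fun _ _ _ _ _ =>
  finite_continuous_monoidHom_of_dense_closure S.finite_toSet hdense

/-- Every topologically finitely generated profinite group (one containing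
a dense finitely generated subgroup) is small. -/
theorem isSmall_of_topologically_finitely_generated
    (G : Type) [Group G] [TopologicalSpace G] [IsTopologicalGroup G]
    [CompactSpace G] [T2Space G] [TotallyDisconnectedSpace G]
    (S : Finset G) (hdense : Dense ((Subgroup.closure (S : Set G) : Subgroup G) : Set G)) :
    IsSmall G :=
  isSmall_of_topologically_finitely_generated_general G S hdense
end

section
/- Let 1 → E → G → H → 1 be an extension of profinite groups (E a closed normal subgroup of G with quotient H), and let p be a prime. If both E and H satisfy condition (F(p)), then so does G. -/
/-!
Restriction to `E` maps the continuous homomorphisms `G → Φ` into a finite set, so it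
suffices to bound the homomorphisms `f` that agree on `E` with a fixed `f₀`. Such an `f` maps
`Z = f₀⁻¹(C)`, with `C` the centraliser of `f₀(E)`, into `C`; and `Z` is open, normal and of
index prime to `p`, since it contains `ker f₀`. On `Z`, two such `f` agree modulo the centre of
`C` and then differ by a central homomorphism; both the reduction and the difference are
homomorphisms `Z → A`, trivial on `Z ⊓ E`, into groups of order prime to `p`. These factor through
the image `N` of `Z` in `G ⧸ E`, which inherits (F(p)) from `G ⧸ E` by induction into the regular
wreath product `A ≀ᵣ ((G ⧸ E) ⧸ N)`, of order `|A| ^ n * n`. Finally `f` is determined by `f|Z`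
and its values on a transversal of the finite quotient `G ⧸ Z`.
-/

/-- Condition (F(p)): for every finite (discrete) group `Φ` of order prime to `p`, the set of
continuous homomorphisms into `Φ` is finite. -/
def SatisfiesFp (p : ℕ) (G : Type) [Group G] [TopologicalSpace G] : Prop :=
  ∀ (Φ : Type) [Group Φ] [TopologicalSpace Φ] [DiscreteTopology Φ] [Finite Φ],
    ¬ p ∣ Nat.card Φ → Finite {f : G →* Φ // Continuous f}

theorem MonoidHom.continuous_iff_isOpen_ker {G A : Type*} [Group G] [TopologicalSpace G]
    [IsTopologicalGroup G] [Group A] [TopologicalSpace A] [DiscreteTopology A] (f : G →* A) :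
    Continuous f ↔ IsOpen (f.ker : Set G) := by
  refine ⟨fun hf => (isOpen_discrete {1}).preimage hf, fun hker => ?_⟩
  refine continuous_of_continuousAt_one f ?_
  rw [ContinuousAt, nhds_discrete A, map_one, Filter.tendsto_pure]
  exact hker.mem_nhds (one_mem f.ker)

namespace Subgroup

variable {Q : Type*} [Group Q] (N : Subgroup Q) [N.Normal] {A : Type*} [Group A]

noncomputable def transversalCocycle (h : Q) (q : Q ⧸ N) : N :=
  ⟨q.out⁻¹ * h * ((h : Q ⧸ N)⁻¹ * q).out, by
    rw [← QuotientGroup.eq_one_iff, QuotientGroup.mk_mul, QuotientGroup.mk_mul,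
      QuotientGroup.mk_inv, QuotientGroup.out_eq', QuotientGroup.out_eq']
    group⟩

theorem transversalCocycle_mul (a b : Q) (q : Q ⧸ N) :
    N.transversalCocycle (a * b) q =
      N.transversalCocycle a q * N.transversalCocycle b ((a : Q ⧸ N)⁻¹ * q) := by
  ext
  simp only [transversalCocycle, Subgroup.coe_mul, QuotientGroup.mk_mul, mul_inv_rev, mul_assoc]
  group

theorem coe_transversalCocycle_of_mem {h : Q} (hh : h ∈ N) (q : Q ⧸ N) :
    (N.transversalCocycle h q : Q) = q.out⁻¹ * h * q.out := by
  simp [transversalCocycle, (QuotientGroup.eq_one_iff h).2 hh]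

/-- The Kaloujnine–Krasner embedding: induction of `ξ` along the transversal `Quotient.out`. -/
noncomputable def inducedWreath (ξ : N →* A) : Q →* A ≀ᵣ (Q ⧸ N) :=
  MonoidHom.mk' (fun h => ⟨fun q => ξ (N.transversalCocycle h q), h⟩) fun a b => by
    ext q
    · simp [transversalCocycle_mul]
    · rfl

theorem inducedWreath_injective : Function.Injective (N.inducedWreath (A := A)) := by
  intro ξ η h
  ext n
  set a := (1 : Q ⧸ N).out
  have ha : a ∈ N := (QuotientGroup.eq_one_iff a).1 (QuotientGroup.out_eq' 1)
  have hconj : N.transversalCocycle (a * n * a⁻¹) 1 = n := by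
    ext
    rw [coe_transversalCocycle_of_mem N (N.mul_mem (N.mul_mem ha n.2) (N.inv_mem ha))]
    simp only [a]
    group
  have := congrFun (congrArg RegularWreathProduct.left (DFunLike.congr_fun h (a * n * a⁻¹))) 1
  simpa [inducedWreath, hconj] using this

theorem isOpen_ker_inducedWreath [TopologicalSpace Q] [IsTopologicalGroup Q] [Finite (Q ⧸ N)]
    (hN : IsOpen (N : Set Q)) {ξ : N →* A} (hξ : IsOpen (ξ.ker : Set N)) :
    IsOpen ((N.inducedWreath ξ).ker : Set Q) := by
  set K : Set Q := Subtype.val '' (ξ.ker : Set N)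
  set U : Set Q := ⋂ q : Q ⧸ N, (fun g => q.out⁻¹ * g * q.out) ⁻¹' K
  have hK : K ⊆ N := by rintro _ ⟨n, -, rfl⟩; exact n.2
  have hU : IsOpen U := isOpen_iInter_of_finite fun q =>
    (hN.isOpenMap_subtype_val _ hξ).preimage (by fun_prop)
  have hU₁ : (1 : Q) ∈ U := Set.mem_iInter.2 fun q => ⟨1, one_mem _, by simp⟩
  have hUker : U ⊆ (N.inducedWreath ξ).ker := by
    intro g hg
    have hgN : g ∈ N := by
      have := hK (Set.mem_iInter.1 hg 1)
      simpa [mul_assoc] using (‹N.Normal›.conj_mem _ this (1 : Q ⧸ N).out)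
    ext q
    · obtain ⟨n, hn, hng⟩ := Set.mem_iInter.1 hg q
      have : N.transversalCocycle g q = n := by
        ext; rw [coe_transversalCocycle_of_mem N hgN, hng]
      simpa [inducedWreath, this] using hn
    · exact (QuotientGroup.eq_one_iff g).2 hgN
  exact isOpen_of_mem_nhds _ (Filter.mem_of_superset (hU.mem_nhds hU₁) hUker)

end Subgroup

theorem SatisfiesFp.of_isOpen_normal {p : ℕ} (hp : p.Prime) {Q : Type} [Group Q]
    [TopologicalSpace Q] [IsTopologicalGroup Q] (hQ : SatisfiesFp p Q) (N : Subgroup Q) [N.Normal]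
    (hN : IsOpen (N : Set Q)) (hindex : ¬ p ∣ N.index) : SatisfiesFp p N := by
  intro A _ _ _ _ hA
  -- an infinite index is `0`, which `p` divides
  have : N.FiniteIndex := ⟨fun h => hindex (h ▸ dvd_zero p)⟩
  let _ : TopologicalSpace (A ≀ᵣ (Q ⧸ N)) := ⊥
  have : DiscreteTopology (A ≀ᵣ (Q ⧸ N)) := ⟨rfl⟩
  have hcard : ¬ p ∣ Nat.card (A ≀ᵣ (Q ⧸ N)) := by
    rw [RegularWreathProduct.card, ← N.index_eq_card]
    intro h
    rcases hp.dvd_mul.1 h with h | h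
    exacts [hA (hp.dvd_of_dvd_pow h), hindex h]
  have := hQ _ hcard
  have hcont (ξ : {ξ : N →* A // Continuous ξ}) : Continuous (N.inducedWreath ξ.1) :=
    (MonoidHom.continuous_iff_isOpen_ker _).2
      (N.isOpen_ker_inducedWreath hN ((MonoidHom.continuous_iff_isOpen_ker _).1 ξ.2))
  exact Finite.of_injective
    (fun ξ => (⟨N.inducedWreath ξ.1, hcont ξ⟩ : {f : Q →* A ≀ᵣ (Q ⧸ N) // Continuous f}))
    fun ξ η h => Subtype.ext (N.inducedWreath_injective (congrArg Subtype.val h))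

section Descent

variable {G : Type*} [Group G] [TopologicalSpace G] [IsTopologicalGroup G] (E : Subgroup G)
  [E.Normal] {Z : Subgroup G}

theorem isQuotientMap_subgroupMap_mk' (hZ : IsOpen (Z : Set G)) :
    Topology.IsQuotientMap ((QuotientGroup.mk' E).subgroupMap Z) := by
  refine IsOpenMap.isQuotientMap ?_
    ((QuotientGroup.continuous_mk.comp continuous_subtype_val).subtype_mk _)
    (MonoidHom.subgroupMap_surjective _ Z)
  intro U hU
  refine isOpen_induced_iff.2
    ⟨_, QuotientGroup.isOpenMap_coe _ (hZ.isOpenMap_subtype_val U hU), ?_⟩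
  ext ⟨x, hx⟩
  simp only [Set.mem_preimage, Set.mem_image, Subtype.exists, Subtype.ext_iff]
  aesop

theorem finite_contHom_le_ker_of_map (hZ : IsOpen (Z : Set G)) {A : Type*} [Group A]
    [TopologicalSpace A] (h : Finite {χ : Z.map (QuotientGroup.mk' E) →* A // Continuous χ}) :
    Finite {δ : Z →* A // Continuous δ ∧ E.subgroupOf Z ≤ δ.ker} := by
  set π := (QuotientGroup.mk' E).subgroupMap Z
  have hker : π.ker = E.subgroupOf Z := by
    rw [Subgroup.ker_subgroupMap, QuotientGroup.ker_mk']
  let χ (δ : {δ : Z →* A // Continuous δ ∧ E.subgroupOf Z ≤ δ.ker}) :=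
    π.liftOfSurjective (MonoidHom.subgroupMap_surjective _ Z) ⟨δ.1, hker.trans_le δ.2.2⟩
  have hχ (δ) : Continuous (χ δ) := by
    rw [(isQuotientMap_subgroupMap_mk' E hZ).continuous_iff]
    convert δ.2.1 using 1
    exact funext fun z => π.liftOfRightInverse_comp_apply _ _ _ z
  refine Finite.of_injective
    (fun δ => (⟨χ δ, hχ δ⟩ : {χ : Z.map (QuotientGroup.mk' E) →* A // Continuous χ}))
    fun δ δ' h => ?_
  have := (π.liftOfSurjective (MonoidHom.subgroupMap_surjective _ Z)).injective
    (congrArg Subtype.val h)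
  exact Subtype.ext (Subtype.mk.inj this)

end Descent

theorem finite_contHom_le_ker_of_satisfiesFp_quotient {p : ℕ} (hp : p.Prime) {G : Type}
    [Group G] [TopologicalSpace G] [IsTopologicalGroup G] {E : Subgroup G} [E.Normal]
    (hQ : SatisfiesFp p (G ⧸ E)) {Z : Subgroup G} [Z.Normal] (hZ : IsOpen (Z : Set G))
    (hindex : ¬ p ∣ Z.index) (A : Type) [Group A] [TopologicalSpace A] [DiscreteTopology A]
    [Finite A] (hA : ¬ p ∣ Nat.card A) :
    Finite {δ : Z →* A // Continuous δ ∧ E.subgroupOf Z ≤ δ.ker} := by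
  have hsurj := QuotientGroup.mk'_surjective E
  have : (Z.map (QuotientGroup.mk' E)).Normal := ‹Z.Normal›.map _ hsurj
  have hZE : SatisfiesFp p (Z.map (QuotientGroup.mk' E)) :=
    hQ.of_isOpen_normal hp _ (QuotientGroup.isOpenMap_coe _ hZ)
      fun h => hindex (h.trans (Subgroup.index_map_dvd _ hsurj))
  exact finite_contHom_le_ker_of_map E hZ (hZE A hA)

section Central

variable {Z L : Type*} [Group Z] [Group L]

def MonoidHom.invMulOfMemCenter (ψ ψ₁ : Z →* L)
    (h : ∀ z, (ψ z)⁻¹ * ψ₁ z ∈ Subgroup.center L) : Z →* Subgroup.center L :=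
  MonoidHom.mk' (fun z => ⟨(ψ z)⁻¹ * ψ₁ z, h z⟩) fun z w => by
    ext
    have hc := Subgroup.mem_center_iff.1 (h z) (ψ w)⁻¹
    simp only [map_mul, mul_inv_rev, Subgroup.coe_mul]
    calc (ψ w)⁻¹ * (ψ z)⁻¹ * (ψ₁ z * ψ₁ w) = (ψ w)⁻¹ * ((ψ z)⁻¹ * ψ₁ z) * ψ₁ w := by group
      _ = (ψ z)⁻¹ * ψ₁ z * ((ψ w)⁻¹ * ψ₁ w) := by rw [hc]; group

variable [TopologicalSpace Z] [TopologicalSpace L] [IsTopologicalGroup L]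

theorem finite_contHom_eqOn_of_mem_center (S : Subgroup Z) (ψ₀ : Z →* L)
    (hψ₀ : ∀ s ∈ S, ψ₀ s ∈ Subgroup.center L)
    (hcenter : Finite {δ : Z →* Subgroup.center L // Continuous δ ∧ S ≤ δ.ker})
    (hquot : Finite {δ : Z →* L ⧸ Subgroup.center L // Continuous δ ∧ S ≤ δ.ker}) :
    Finite {ψ : Z →* L // Continuous ψ ∧ ∀ s ∈ S, ψ s = ψ₀ s} := by
  set T := {ψ : Z →* L // Continuous ψ ∧ ∀ s ∈ S, ψ s = ψ₀ s}
  let q (ψ : T) : {δ : Z →* L ⧸ Subgroup.center L // Continuous δ ∧ S ≤ δ.ker} :=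
    ⟨(QuotientGroup.mk' _).comp ψ.1, continuous_quot_mk.comp ψ.2.1, fun s hs => by
      simpa [ψ.2.2 s hs] using hψ₀ s hs⟩
  have hfiber (δ) : Finite {ψ // q ψ = δ} := by
    rcases isEmpty_or_nonempty {ψ // q ψ = δ} with h | ⟨ψ₁, hψ₁⟩
    · infer_instance
    have hmem (ψ : {ψ // q ψ = δ}) (z : Z) : (ψ.1.1 z)⁻¹ * ψ₁.1 z ∈ Subgroup.center L := by
      have := DFunLike.congr_fun (congrArg Subtype.val (ψ.2.trans hψ₁.symm)) z
      exact QuotientGroup.eq.1 this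
    let d (ψ : {ψ // q ψ = δ}) : {δ : Z →* Subgroup.center L // Continuous δ ∧ S ≤ δ.ker} :=
      ⟨MonoidHom.invMulOfMemCenter ψ.1.1 ψ₁.1 (hmem ψ),
        (ψ.1.2.1.inv.mul ψ₁.2.1).subtype_mk _, fun s hs => by
          ext; simp [MonoidHom.invMulOfMemCenter, ψ.1.2.2 s hs, ψ₁.2.2 s hs]⟩
    refine Finite.of_injective d fun ψ ψ' h => ?_
    refine Subtype.ext (Subtype.ext (MonoidHom.ext fun z => ?_))
    have := congrArg Subtype.val (DFunLike.congr_fun (congrArg Subtype.val h) z)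
    simpa [d, MonoidHom.invMulOfMemCenter] using this
  exact Finite.of_equiv _ (Equiv.sigmaFiberEquiv q)

end Central

theorem MonoidHom.eq_of_eqOn_of_eq_out {G M : Type*} [Group G] [Monoid M] {Z : Subgroup G}
    {f g : G →* M} (hZ : ∀ z ∈ Z, f z = g z) (hout : ∀ q : G ⧸ Z, f q.out = g q.out) :
    f = g := by
  ext x
  have hx : (x : G ⧸ Z).out⁻¹ * x ∈ Z := QuotientGroup.eq.1 (QuotientGroup.out_eq' _)
  calc f x = f (x : G ⧸ Z).out * f ((x : G ⧸ Z).out⁻¹ * x) := by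
        rw [← map_mul, mul_inv_cancel_left]
    _ = g x := by rw [hout, hZ _ hx, ← map_mul, mul_inv_cancel_left]

section Centralizer

variable {G Φ : Type*} [Group G] [Group Φ] (E : Subgroup G) [E.Normal] (f₀ : G →* Φ)

theorem normal_comap_centralizer_map :
    ((Subgroup.centralizer (E.map f₀ : Set Φ)).comap f₀).Normal := by
  refine ⟨fun z hz g => Subgroup.mem_centralizer_iff.2 ?_⟩
  rintro _ ⟨e, he, rfl⟩
  have := Subgroup.mem_centralizer_iff.1 hz (f₀ (g⁻¹ * e * g))
    ⟨_, ‹E.Normal›.conj_mem' e he g, rfl⟩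
  simp only [map_mul, map_inv] at this ⊢
  set a := f₀ g
  calc f₀ e * (a * f₀ z * a⁻¹) = a * (a⁻¹ * f₀ e * a * f₀ z) * a⁻¹ := by group
    _ = a * f₀ z * a⁻¹ * f₀ e := by rw [this]; group

theorem map_mem_centralizer_map_of_eqOn {f : G →* Φ} (hf : ∀ e ∈ E, f e = f₀ e) {z : G}
    (hz : f₀ z ∈ Subgroup.centralizer (E.map f₀ : Set Φ)) :
    f z ∈ Subgroup.centralizer (E.map f₀ : Set Φ) := by
  refine Subgroup.mem_centralizer_iff.2 ?_
  rintro _ ⟨e, he, rfl⟩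
  have h₁ := hf _ (‹E.Normal›.conj_mem e he z)
  have h₂ := Subgroup.mem_centralizer_iff.1 hz (f₀ e) ⟨e, he, rfl⟩
  have h₃ : f₀ z * f₀ e * (f₀ z)⁻¹ = f₀ e := by rw [← h₂]; group
  simp only [map_mul, map_inv, hf e he, h₃, mul_inv_eq_iff_eq_mul] at h₁
  exact h₁.symm

end Centralizer

theorem finite_contHom_eqOn_of_satisfiesFp_quotient {p : ℕ} (hp : p.Prime) {G : Type}
    [Group G] [TopologicalSpace G] [IsTopologicalGroup G] [CompactSpace G] {E : Subgroup G}
    [E.Normal] (hQ : SatisfiesFp p (G ⧸ E)) {Φ : Type} [Group Φ] [TopologicalSpace Φ]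
    [DiscreteTopology Φ] [Finite Φ] (hΦ : ¬ p ∣ Nat.card Φ) {f₀ : G →* Φ} (hf₀ : Continuous f₀) :
    Finite {f : G →* Φ // Continuous f ∧ ∀ e ∈ E, f e = f₀ e} := by
  set C := Subgroup.centralizer (E.map f₀ : Set Φ)
  set Z := C.comap f₀
  have : Z.Normal := normal_comap_centralizer_map E f₀
  have hZ : IsOpen (Z : Set G) := Subgroup.isOpen_mono (MonoidHom.ker_le_comap f₀ C)
    ((MonoidHom.continuous_iff_isOpen_ker f₀).1 hf₀)
  have hindex : ¬ p ∣ Z.index := fun h => hΦ <| h.trans <|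
    (Subgroup.index_dvd_of_le (MonoidHom.ker_le_comap f₀ C)).trans
      (Subgroup.index_ker f₀ ▸ f₀.range.card_subgroup_dvd_card)
  have : Finite (G ⧸ Z) := Z.quotient_finite_of_isOpen hZ
  have : DiscreteTopology (C ⧸ Subgroup.center C) :=
    QuotientGroup.discreteTopology (isOpen_discrete _)
  have hfin (A : Type) [Group A] [TopologicalSpace A] [DiscreteTopology A] [Finite A]
      (hA : Nat.card A ∣ Nat.card C) :=
    finite_contHom_le_ker_of_satisfiesFp_quotient hp hQ hZ hindex A
      fun h => hΦ (h.trans (hA.trans C.card_subgroup_dvd_card))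
  let ψ₀ : Z →* C := (f₀.comp Z.subtype).codRestrict C fun z => z.2
  have hψ₀ (s) (hs : s ∈ E.subgroupOf Z) : ψ₀ s ∈ Subgroup.center C :=
    Subgroup.mem_center_iff.2 fun c =>
      Subtype.ext (Subgroup.mem_centralizer_iff.1 c.2 _ ⟨s, hs, rfl⟩).symm
  have := finite_contHom_eqOn_of_mem_center (E.subgroupOf Z) ψ₀ hψ₀
    (hfin _ (Subgroup.card_subgroup_dvd_card _)) (hfin _ (Subgroup.card_quotient_dvd_card _))
  let ψ (f : {f : G →* Φ // Continuous f ∧ ∀ e ∈ E, f e = f₀ e}) :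
      {ψ : Z →* C // Continuous ψ ∧ ∀ s ∈ E.subgroupOf Z, ψ s = ψ₀ s} :=
    ⟨(f.1.comp Z.subtype).codRestrict C fun z =>
        map_mem_centralizer_map_of_eqOn E f₀ f.2.2 z.2,
      (f.2.1.comp continuous_subtype_val).subtype_mk _, fun s hs => Subtype.ext (f.2.2 _ hs)⟩
  refine Finite.of_injective (fun f => (ψ f, fun q : G ⧸ Z => f.1 q.out)) fun f g h => ?_
  simp only [Prod.mk.injEq] at h
  refine Subtype.ext (MonoidHom.eq_of_eqOn_of_eq_out (Z := Z) (fun z hz => ?_) (congrFun h.2))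
  exact congrArg Subtype.val (DFunLike.congr_fun (congrArg Subtype.val h.1) ⟨z, hz⟩)

theorem satisfiesFp_of_extension_general
    (p : ℕ) (hp : p.Prime)
    (G : Type) [Group G] [TopologicalSpace G] [IsTopologicalGroup G]
    [CompactSpace G]
    (E : Subgroup G) [E.Normal]
    (hE : SatisfiesFp p E) (hQ : SatisfiesFp p (G ⧸ E)) :
    SatisfiesFp p G := by
  intro Φ _ _ _ _ hΦ
  have := hE Φ hΦ
  let res (f : {f : G →* Φ // Continuous f}) : {φ : E →* Φ // Continuous φ} :=
    ⟨f.1.comp E.subtype, f.2.comp continuous_subtype_val⟩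
  have hfiber (φ) : Finite {f // res f = φ} := by
    rcases isEmpty_or_nonempty {f // res f = φ} with h | ⟨f₀, rfl⟩
    · infer_instance
    have := finite_contHom_eqOn_of_satisfiesFp_quotient hp hQ hΦ f₀.2
    refine Finite.of_injective (β := {f : G →* Φ // Continuous f ∧ ∀ e ∈ E, f e = f₀.1 e})
      (fun f => ⟨f.1.1, f.1.2, fun e he =>
        DFunLike.congr_fun (congrArg Subtype.val f.2) ⟨e, he⟩⟩)
      fun f g h => Subtype.ext (Subtype.ext (Subtype.mk.inj h))
  exact Finite.of_equiv _ (Equiv.sigmaFiberEquiv res)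

/-- Let `1 → E → G → H → 1` be an extension of profinite groups, i.e. `E` is
a closed normal subgroup of the profinite group `G` with quotient `H = G ⧸ E`, and let `p` be a
prime. If both `E` and `G ⧸ E` satisfy condition (F(p)), then so does `G`. -/
theorem satisfiesFp_of_extension
    (p : ℕ) (hp : p.Prime)
    (G : Type) [Group G] [TopologicalSpace G] [IsTopologicalGroup G]
    [CompactSpace G] [T2Space G] [TotallyDisconnectedSpace G]
    (E : Subgroup G) [E.Normal] (hclosed : IsClosed (E : Set G))
    (hE : SatisfiesFp p E) (hQ : SatisfiesFp p (G ⧸ E)) :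
    SatisfiesFp p G :=
  satisfiesFp_of_extension_general p hp G E hE hQ
end
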